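/- Let R be a commutative ring with identity which is not an integral domain, suppose the annihilator-ideal graph A_I(R) is not equal to the annihilating-ideal graph 𝔸𝔾(R), and suppose 𝔸𝔾(R) is a star graph. Then: (1) R is indecomposable, i.e., R is not ring-isomorphic to a direct product R₁ × R₂ of two nonzero rings; and (2) A_I(R) is a complete graph. -/

import Mathlib

/-- The vertex set of the annihilator-ideal/annihilating-ideal graphs:
nonzero ideals with nonzero annihilator. -/
abbrev AnnVert (R : Type*) [CommRing R] : Type _ :=
  {I : Ideal R // I ≠ ⊥ ∧ Submodule.annihilator I ≠ ⊥}

/-- The annihilator-ideal graph `A_I(R)`. -/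
def annihilatorIdealGraph (R : Type*) [CommRing R] : SimpleGraph (AnnVert R) where
  Adj I J := I ≠ J ∧
    ((Submodule.annihilator (I.1 * J.1) : Ideal R) : Set R) ≠
      ↑(Submodule.annihilator I.1) ∪ ↑(Submodule.annihilator J.1)
  symm := by
    constructor
    rintro I J ⟨hne, h⟩
    exact ⟨hne.symm, by rwa [mul_comm, Set.union_comm]⟩
  loopless := by constructor; rintro I ⟨h, -⟩; exact h rfl

/-- The annihilating-ideal graph `𝔸𝔾(R)`. -/
def annihilatingIdealGraph (R : Type*) [CommRing R] : SimpleGraph (AnnVert R) where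
  Adj I J := I ≠ J ∧ I.1 * J.1 = ⊥
  symm := by constructor; rintro I J ⟨hne, h⟩; exact ⟨hne.symm, by rwa [mul_comm]⟩
  loopless := by constructor; rintro I ⟨h, -⟩; exact h rfl

/-- `G` is a complete bipartite graph with parts `s` and `t`. -/
def SimpleGraph.IsCompleteBipartiteWith {V : Type*} (G : SimpleGraph V) (s t : Set V) : Prop :=
  Disjoint s t ∧ s ∪ t = Set.univ ∧
    ∀ u v, G.Adj u v ↔ (u ∈ s ∧ v ∈ t) ∨ (u ∈ t ∧ v ∈ s)

/-- `G` is a star graph: complete bipartite with one part a single vertex and the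
other part nonempty. -/
def SimpleGraph.IsStarGraph {V : Type*} (G : SimpleGraph V) : Prop :=
  ∃ (c : V) (t : Set V), t.Nonempty ∧ G.IsCompleteBipartiteWith {c} t

universe u

/-!
Let `C` be the centre of the star `𝔸𝔾(R)`. Then `C` kills every other vertex, and two nonzero
ideals with zero product coincide unless one of them is `C`. An edge `I — J` of `A_I(R)` that is
not an edge of `𝔸𝔾(R)` provides `x ∈ Ann(IJ) \ (Ann I ∪ Ann J)`; comparing `xI` and `xJ` with
`C` produces vertices `P ≠ Q` different from `C` with `PQ = C`, so that `C² = (CP)Q = 0`.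

Of two nonzero idempotent ideals with zero product, one must be `C`, contradicting `C² = 0`; hence
`R` has no nontrivial idempotents. If two vertices `U, V ≠ C` were not adjacent in `A_I(R)`, then
`Ann(UV)`, being the union of two ideals, would equal `Ann U` (say). This forces `VP = Q` and
`VQ = P`, hence `P = Q`.
-/

open Submodule (annihilator annihilator_mono)

namespace Submodule

variable {R M : Type*} [Ring R] [AddCommGroup M] [Module R M]

theorem eq_or_eq_of_coe_eq_union {N A B : Submodule R M} (hA : A ≤ N) (hB : B ≤ N)
    (h : (N : Set M) = (A : Set M) ∪ (B : Set M)) : N = A ∨ N = B :=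
  (AddSubgroupClass.subset_union.1 h.subset).imp (le_antisymm · hA) (le_antisymm · hB)

end Submodule

namespace Ideal

variable {R : Type*} [CommRing R]

theorem mul_eq_bot_iff_le_annihilator {K W : Ideal R} : K * W = ⊥ ↔ K ≤ annihilator W := by
  rw [Submodule.le_annihilator_iff, smul_eq_mul]

theorem span_singleton_mul_eq_bot_iff {x : R} {K : Ideal R} :
    span {x} * K = ⊥ ↔ x ∈ annihilator K := by
  rw [mul_eq_bot_iff_le_annihilator, span_singleton_le_iff_mem]

theorem annihilator_ne_bot_of_mul_eq_bot {K W : Ideal R} (h : K * W = ⊥) (hW : W ≠ ⊥) :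
    annihilator K ≠ ⊥ := by
  rw [mul_comm, mul_eq_bot_iff_le_annihilator] at h
  exact fun hK => hW (le_bot_iff.1 (hK ▸ h))

end Ideal

open Ideal

theorem annihilatingIdealGraph_le_annihilatorIdealGraph (R : Type*) [CommRing R] :
    annihilatingIdealGraph R ≤ annihilatorIdealGraph R := by
  rintro I J ⟨hIJ, hmul⟩
  refine ⟨hIJ, fun h => ?_⟩
  have hone : (1 : R) ∈ (annihilator (I.1 * J.1) : Set R) := by
    simp [hmul, Submodule.annihilator_bot]
  rw [h] at hone
  rcases hone with hone | hone
  · exact I.2.1 (Submodule.annihilator_eq_top_iff.1 ((eq_top_iff_one _).2 hone))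
  · exact J.2.1 (Submodule.annihilator_eq_top_iff.1 ((eq_top_iff_one _).2 hone))

variable {R : Type*} [CommRing R]

/-- The properties of the centre `C` of a star-shaped `𝔸𝔾(R)`, stated for ideals rather than
vertices. -/
structure IsStarCentre (C : Ideal R) : Prop where
  ne_bot : C ≠ ⊥
  mul_eq_bot : ∀ W : AnnVert R, W.1 ≠ C → C * W.1 = ⊥
  eq_or_eq_or_eq_of_mul_eq_bot : ∀ {K W : Ideal R}, K ≠ ⊥ → W ≠ ⊥ → K * W = ⊥ →
    K = C ∨ W = C ∨ K = W

theorem SimpleGraph.IsCompleteBipartiteWith.isStarCentre {c : AnnVert R} {t : Set (AnnVert R)}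
    (h : (annihilatingIdealGraph R).IsCompleteBipartiteWith {c} t) : IsStarCentre c.1 where
  ne_bot := c.2.1
  mul_eq_bot W hWc := by
    have hW : W ∈ ({c} ∪ t : Set (AnnVert R)) := h.2.1 ▸ Set.mem_univ W
    have hWt : W ∈ t := hW.resolve_left fun hWc' => hWc (congrArg Subtype.val hWc')
    exact ((h.2.2 c W).2 (Or.inl ⟨rfl, hWt⟩)).2
  eq_or_eq_or_eq_of_mul_eq_bot {K W} hK hW hKW := by
    by_cases hKW' : K = W
    · exact Or.inr (Or.inr hKW')
    let k : AnnVert R := ⟨K, hK, annihilator_ne_bot_of_mul_eq_bot hKW hW⟩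
    let w : AnnVert R := ⟨W, hW, annihilator_ne_bot_of_mul_eq_bot (mul_comm K W ▸ hKW) hK⟩
    rcases (h.2.2 k w).1 ⟨fun hkw => hKW' (congrArg Subtype.val hkw), hKW⟩ with
      ⟨hk, -⟩ | ⟨-, hw⟩
    · exact Or.inl (congrArg Subtype.val hk)
    · exact Or.inr (Or.inl (congrArg Subtype.val hw))

namespace IsStarCentre

variable {C : Ideal R} (hC : IsStarCentre C)
include hC

theorem eq_or_eq_of_mul_eq_bot {K W : Ideal R} (hK : K ≠ ⊥) (hW : W ≠ ⊥) (hWC : W ≠ C)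
    (h : K * W = ⊥) : K = C ∨ K = W :=
  (hC.eq_or_eq_or_eq_of_mul_eq_bot hK hW h).imp_right (Or.resolve_left · hWC)

theorem mul_ne_bot {K W : Ideal R} (hK : K ≠ ⊥) (hW : W ≠ ⊥) (hKC : K ≠ C) (hWC : W ≠ C)
    (hKW : K ≠ W) : K * W ≠ ⊥ := fun h =>
  (hC.eq_or_eq_of_mul_eq_bot hK hW hWC h).elim hKC hKW

theorem annihilatingIdealGraph_adj_of_eq {I J : AnnVert R} (hIJ : I ≠ J) (hIC : I.1 = C) :
    (annihilatingIdealGraph R).Adj I J :=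
  ⟨hIJ, hIC ▸ hC.mul_eq_bot J fun hJC => hIJ (Subtype.ext (hIC.trans hJC.symm))⟩

theorem mul_self_eq_bot {P : AnnVert R} {Q : Ideal R} (hPC : P.1 ≠ C) (hPQ : P.1 * Q = C) :
    C * C = ⊥ := by
  calc C * C = C * P.1 * Q := by rw [mul_assoc, hPQ]
    _ = ⊥ := by rw [hC.mul_eq_bot P hPC, bot_mul]

theorem mul_eq_of_mul_eq {X I J : Ideal R} (hI : I ≠ ⊥) (hIC : I ≠ C) (hIJ : I * J ≠ ⊥)
    (hXIJ : X * (I * J) = ⊥) (hXI : X * I = C) (hXJ : X * J = I) : I * J = C := by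
  have hII : I * I = ⊥ := by
    calc I * I = X * J * I := by rw [hXJ]
      _ = ⊥ := by rw [← hXIJ]; ring
  have hIJI : I * J * I = ⊥ := by
    calc I * J * I = I * I * J := by ring
      _ = ⊥ := by rw [hII, bot_mul]
  refine (hC.eq_or_eq_of_mul_eq_bot hIJ hI hIC hIJI).resolve_right fun h => hC.ne_bot ?_
  rw [← hXI, ← h, hXIJ]

theorem exists_mul_eq_of_mul_eq_bot {X : Ideal R} {I J : AnnVert R} (hIJ : I ≠ J)
    (hIC : I.1 ≠ C) (hJC : J.1 ≠ C) (hIJ0 : I.1 * J.1 ≠ ⊥) (hXIJ : X * (I.1 * J.1) = ⊥)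
    (hXI0 : X * I.1 ≠ ⊥) (hXJ0 : X * J.1 ≠ ⊥) :
    ∃ P Q : AnnVert R, P ≠ Q ∧ P.1 ≠ C ∧ Q.1 ≠ C ∧ P.1 * Q.1 = C := by
  have hXIJ' : X * I.1 * J.1 = ⊥ := by rw [mul_assoc, hXIJ]
  have hXJI : X * J.1 * I.1 = ⊥ := by rw [mul_assoc, mul_comm J.1, hXIJ]
  rcases hC.eq_or_eq_of_mul_eq_bot hXI0 J.2.1 hJC hXIJ' with hXI | hXI <;>
    rcases hC.eq_or_eq_of_mul_eq_bot hXJ0 I.2.1 hIC hXJI with hXJ | hXJ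
  · by_cases hXI_eq : X = I.1
    · exact ⟨I, J, hIJ, hIC, hJC, hXI_eq ▸ hXJ⟩
    have hX0 : X ≠ ⊥ := fun h => hXI0 (by rw [h, bot_mul])
    have hXC : X ≠ C := fun h => hC.ne_bot (by rw [← hXI, h, hC.mul_eq_bot I hIC])
    exact ⟨⟨X, hX0, annihilator_ne_bot_of_mul_eq_bot hXIJ hIJ0⟩, I,
      fun h => hXI_eq (congrArg Subtype.val h), hXC, hIC, hXI⟩
  · exact ⟨I, J, hIJ, hIC, hJC, hC.mul_eq_of_mul_eq I.2.1 hIC hIJ0 hXIJ hXI hXJ⟩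
  · rw [mul_comm I.1] at hIJ0 hXIJ
    exact ⟨J, I, hIJ.symm, hJC, hIC, hC.mul_eq_of_mul_eq J.2.1 hJC hIJ0 hXIJ hXJ hXI⟩
  · exact absurd (Subtype.ext (le_antisymm (hXJ ▸ mul_le_right) (hXI ▸ mul_le_right))) hIJ

theorem exists_mul_eq {I J : AnnVert R} (hAI : (annihilatorIdealGraph R).Adj I J)
    (hAG : ¬(annihilatingIdealGraph R).Adj I J) :
    ∃ P Q : AnnVert R, P ≠ Q ∧ P.1 ≠ C ∧ Q.1 ≠ C ∧ P.1 * Q.1 = C := by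
  obtain ⟨hIJ, hann⟩ := hAI
  have hIJ0 : I.1 * J.1 ≠ ⊥ := fun h => hAG ⟨hIJ, h⟩
  have hIC : I.1 ≠ C := fun h => hAG (hC.annihilatingIdealGraph_adj_of_eq hIJ h)
  have hJC : J.1 ≠ C := fun h => hAG (hC.annihilatingIdealGraph_adj_of_eq hIJ.symm h).symm
  obtain ⟨x, hx, hxIJ⟩ := Set.not_subset.1 fun h => hann <| h.antisymm <|
    Set.union_subset (annihilator_mono mul_le_left) (annihilator_mono mul_le_right)
  refine hC.exists_mul_eq_of_mul_eq_bot (X := span {x}) hIJ hIC hJC hIJ0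
    (span_singleton_mul_eq_bot_iff.2 hx) ?_ ?_ <;> rw [Ne, span_singleton_mul_eq_bot_iff]
  exacts [fun h => hxIJ (Or.inl h), fun h => hxIJ (Or.inr h)]

theorem eq_bot_or_eq_bot_of_mul_eq_bot (hCC : C * C = ⊥) {A B : Ideal R} (hA : A * A = A)
    (hB : B * B = B) (hAB : A * B = ⊥) : A = ⊥ ∨ B = ⊥ := by
  by_contra! h
  obtain ⟨hA0, hB0⟩ := h
  rcases hC.eq_or_eq_or_eq_of_mul_eq_bot hA0 hB0 hAB with hAC | hBC | hAB'
  · exact hA0 (by rw [← hA, hAC, hCC])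
  · exact hB0 (by rw [← hB, hBC, hCC])
  · subst hAB'
    exact hA0 (hA ▸ hAB)

theorem isEmpty_ringEquiv_prod (hCC : C * C = ⊥) (R₁ R₂ : Type*) [CommRing R₁] [CommRing R₂]
    [Nontrivial R₁] [Nontrivial R₂] : IsEmpty (R ≃+* R₁ × R₂) := by
  refine ⟨fun f => ?_⟩
  have hidem := hC.eq_bot_or_eq_bot_of_mul_eq_bot hCC (A := span {f.symm (1, 0)})
    (B := span {f.symm (0, 1)})
  simp only [span_singleton_mul_span_singleton, ← map_mul, Prod.mk_mul_mk, mul_one, mul_zero,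
    span_singleton_eq_bot, map_eq_zero_iff _ f.symm.injective] at hidem
  simp at hidem

theorem annihilator_mul_ne {P Q : AnnVert R} (hPQ : P ≠ Q) (hPC : P.1 ≠ C) (hQC : Q.1 ≠ C)
    (hPQC : P.1 * Q.1 = C) {U V : AnnVert R} (hUC : U.1 ≠ C) (hVC : V.1 ≠ C) (hUV : U ≠ V) :
    annihilator (U.1 * V.1) ≠ annihilator U.1 := by
  intro hann
  have hCU := hC.mul_eq_bot U hUC
  have hCV := hC.mul_eq_bot V hVC
  have hUV0 : U.1 * V.1 ≠ ⊥ :=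
    hC.mul_ne_bot U.2.1 V.2.1 hUC hVC fun h => hUV (Subtype.ext h)
  have hUVC : U.1 * V.1 ≠ C := fun h => hUV0 <| by
    rw [mul_comm, mul_eq_bot_iff_le_annihilator, ← hann, h, ← mul_eq_bot_iff_le_annihilator,
      mul_comm, hCV]
  have hVW : ∀ W : AnnVert R, W.1 ≠ C → V.1 * W.1 ≠ C := by
    intro W hWC hVWC
    have hWUV : W.1 * (U.1 * V.1) = ⊥ := by
      calc W.1 * (U.1 * V.1) = V.1 * W.1 * U.1 := by ring
        _ = ⊥ := by rw [hVWC, hCU]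
    rw [mul_eq_bot_iff_le_annihilator, hann, ← mul_eq_bot_iff_le_annihilator] at hWUV
    have hWU := (hC.eq_or_eq_of_mul_eq_bot W.2.1 U.2.1 hUC hWUV).resolve_left hWC
    exact hUVC (by rw [← hWU, mul_comm, hVWC])
  have hVmul : ∀ {W W' : AnnVert R}, W ≠ W' → W.1 ≠ C → W'.1 ≠ C → W.1 * W'.1 = C →
      V.1 * W.1 = W'.1 := by
    intro W W' hWW' hWC hW'C hWW'C
    have hVW' : V ≠ W := by
      rintro rfl
      exact hVW W' hW'C hWW'C
    have hVWW' : V.1 * W.1 * W'.1 = ⊥ := by rw [mul_assoc, hWW'C, mul_comm, hCV]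
    have hVW0 := hC.mul_ne_bot V.2.1 W.2.1 hVC hWC fun h => hVW' (Subtype.ext h)
    exact (hC.eq_or_eq_of_mul_eq_bot hVW0 W'.2.1 hW'C hVWW').resolve_left (hVW W hWC)
  have hQP : Q.1 ≤ P.1 := hVmul hPQ hPC hQC hPQC ▸ mul_le_right
  have hPQ' : P.1 ≤ Q.1 := hVmul hPQ.symm hQC hPC (mul_comm P.1 Q.1 ▸ hPQC) ▸ mul_le_right
  exact hPQ (Subtype.ext (le_antisymm hPQ' hQP))

theorem annihilatorIdealGraph_adj {P Q : AnnVert R} (hPQ : P ≠ Q) (hPC : P.1 ≠ C)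
    (hQC : Q.1 ≠ C) (hPQC : P.1 * Q.1 = C) {I J : AnnVert R} (hIJ : I ≠ J) :
    (annihilatorIdealGraph R).Adj I J := by
  by_cases hIC : I.1 = C
  · exact annihilatingIdealGraph_le_annihilatorIdealGraph R
      (hC.annihilatingIdealGraph_adj_of_eq hIJ hIC)
  by_cases hJC : J.1 = C
  · exact annihilatingIdealGraph_le_annihilatorIdealGraph R
      (hC.annihilatingIdealGraph_adj_of_eq hIJ.symm hJC).symm
  refine ⟨hIJ, fun h => ?_⟩
  rcases Submodule.eq_or_eq_of_coe_eq_union (annihilator_mono mul_le_left)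
    (annihilator_mono mul_le_right) h with h | h
  · exact hC.annihilator_mul_ne hPQ hPC hQC hPQC hIC hJC hIJ h
  · exact hC.annihilator_mul_ne hPQ hPC hQC hPQC hJC hIC hIJ.symm (mul_comm I.1 J.1 ▸ h)

end IsStarCentre

theorem stmt18_general (R : Type u) [CommRing R]
    (hne : annihilatorIdealGraph R ≠ annihilatingIdealGraph R)
    (hstar : (annihilatingIdealGraph R).IsStarGraph) :
    (¬ ∃ (R₁ R₂ : Type u) (_ : CommRing R₁) (_ : CommRing R₂)
        (_ : Nontrivial R₁) (_ : Nontrivial R₂), Nonempty (R ≃+* R₁ × R₂)) ∧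
    (∀ I J : AnnVert R, I ≠ J → (annihilatorIdealGraph R).Adj I J) := by
  obtain ⟨c, t, -, hct⟩ := hstar
  have hC := hct.isStarCentre
  obtain ⟨I, J, hAI, hAG⟩ : ∃ I J, (annihilatorIdealGraph R).Adj I J ∧
      ¬(annihilatingIdealGraph R).Adj I J := by
    by_contra! h
    exact hne (le_antisymm (fun I J => h I J) (annihilatingIdealGraph_le_annihilatorIdealGraph R))
  obtain ⟨P, Q, hPQ, hPC, hQC, hPQC⟩ := hC.exists_mul_eq hAI hAG
  refine ⟨?_, fun I J hIJ => hC.annihilatorIdealGraph_adj hPQ hPC hQC hPQC hIJ⟩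
  rintro ⟨R₁, R₂, _, _, _, _, ⟨f⟩⟩
  exact (hC.isEmpty_ringEquiv_prod (hC.mul_self_eq_bot hPC hPQC) R₁ R₂).false f

theorem stmt18 (R : Type u) [CommRing R] [Nontrivial R] (hdom : ¬IsDomain R)
    (hne : annihilatorIdealGraph R ≠ annihilatingIdealGraph R)
    (hstar : (annihilatingIdealGraph R).IsStarGraph) :
    (¬ ∃ (R₁ R₂ : Type u) (_ : CommRing R₁) (_ : CommRing R₂)
        (_ : Nontrivial R₁) (_ : Nontrivial R₂), Nonempty (R ≃+* R₁ × R₂)) ∧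
    (∀ I J : AnnVert R, I ≠ J → (annihilatorIdealGraph R).Adj I J) :=
  stmt18_general R hne hstar
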